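/- arXiv:2209.12198 — 4 statements merged into one kernel-verified Lean document; each statement's English description precedes it below -/
import Mathlib

section
/- Let (λ_i)_{i≥1} be a non-increasing sequence of positive real numbers with Σ_{i=1}^∞ λ_i < ∞, and let 0 < s < 1. If there exist constants C > 0 and δ > 0 such that N(λ) ≤ C·λ^{-s} for all λ ∈ (0, δ], then there exists a constant C' > 0 such that λ_i ≤ C'·i^{-1/s} for all i ≥ 1; explicitly one may take C' so that λ_i ≤ (C₃ · s^{-s} (1-s)^{s-1})^{1/s} · i^{-1/s} whenever N(λ) ≤ C₃·λ^{-s} holds for all λ ∈ (0, s·λ₁/(1-s)]. -/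
/-!
Since `λ ↦ N(λ)` is non-increasing, a bound `N(λ) ≤ C λ^{-s}` on `(0, δ]` extends, with a larger
constant, to any interval `(0, M]`. Because the `λ_j` are non-increasing, the first `i` terms of
`N(λ)` are each at least `λ_i / (λ_i + λ)`, so `i · λ_i / (λ_i + λ) ≤ N(λ)`. Choosing
`λ = s λ_i / (1 - s)` makes `λ_i / (λ_i + λ) = 1 - s`, and the bound on `N(λ)` turns into
`λ_i^s · i ≤ C₃ s^{-s} (1 - s)^{s-1}`.
-/

open Real Set

noncomputable def effectiveDim (lam : ℕ → ℝ) (l : ℝ) : ℝ :=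
  ∑' i, lam i / (lam i + l)

section EffectiveDim

variable {lam : ℕ → ℝ}

lemma summable_div_add (hnonneg : ∀ i, 0 ≤ lam i) (hsum : Summable lam) {l : ℝ} (hl : 0 < l) :
    Summable fun i => lam i / (lam i + l) :=
  (hsum.div_const l).of_nonneg_of_le (fun i => div_nonneg (hnonneg i) (by linarith [hnonneg i]))
    fun i => div_le_div_of_nonneg_left (hnonneg i) hl (by linarith [hnonneg i])

lemma effectiveDim_antitoneOn (hnonneg : ∀ i, 0 ≤ lam i) (hsum : Summable lam) :
    AntitoneOn (effectiveDim lam) (Ioi 0) := by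
  intro l hl l' hl' hll'
  refine Summable.tsum_le_tsum (fun i => ?_) (summable_div_add hnonneg hsum hl')
    (summable_div_add hnonneg hsum hl)
  exact div_le_div_of_nonneg_left (hnonneg i) (by linarith [hnonneg i, mem_Ioi.mp hl])
    (by linarith)

lemma succ_mul_div_add_le_effectiveDim (hnonneg : ∀ i, 0 ≤ lam i) (hmono : Antitone lam)
    (hsum : Summable lam) {l : ℝ} (hl : 0 < l) (i : ℕ) :
    ((i : ℝ) + 1) * (lam i / (lam i + l)) ≤ effectiveDim lam l := by
  have hterm : ∀ j ∈ Finset.range (i + 1), lam i / (lam i + l) ≤ lam j / (lam j + l) := by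
    intro j hj
    have hij : lam i ≤ lam j := hmono (Finset.mem_range_succ_iff.mp hj)
    rw [div_le_div_iff₀ (by linarith [hnonneg i]) (by linarith [hnonneg j])]
    nlinarith
  calc ((i : ℝ) + 1) * (lam i / (lam i + l))
      = ∑ _j ∈ Finset.range (i + 1), lam i / (lam i + l) := by simp
    _ ≤ ∑ j ∈ Finset.range (i + 1), lam j / (lam j + l) := Finset.sum_le_sum hterm
    _ ≤ effectiveDim lam l :=
      (summable_div_add hnonneg hsum hl).sum_le_tsum _
        fun j _ => div_nonneg (hnonneg j) (by linarith [hnonneg j])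

end EffectiveDim

lemma exists_le_mul_rpow_neg_of_antitoneOn {f : ℝ → ℝ} (hf : AntitoneOn f (Ioi 0)) {s C δ : ℝ}
    (hs : 0 ≤ s) (hC : 0 < C) (hδ : 0 < δ) (h : ∀ l, 0 < l → l ≤ δ → f l ≤ C * l ^ (-s))
    (M : ℝ) : ∃ C₃, 0 < C₃ ∧ ∀ l, 0 < l → l ≤ M → f l ≤ C₃ * l ^ (-s) := by
  refine ⟨max C (C * δ ^ (-s) * M ^ s), lt_max_of_lt_left hC, fun l hl hlM => ?_⟩
  rcases le_or_gt l δ with hlδ | hδl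
  · exact (h l hl hlδ).trans (mul_le_mul_of_nonneg_right (le_max_left _ _) (by positivity))
  have hM : 0 < M := hδ.trans_le (hδl.le.trans hlM)
  calc f l ≤ f δ := hf hδ (hδ.trans hδl) hδl.le
    _ ≤ C * δ ^ (-s) := h δ hδ le_rfl
    _ = C * δ ^ (-s) * M ^ s * M ^ (-s) := by
      rw [mul_assoc _ (M ^ s), ← rpow_add hM, add_neg_cancel, rpow_zero, mul_one]
    _ ≤ C * δ ^ (-s) * M ^ s * l ^ (-s) :=
      mul_le_mul_of_nonneg_left (rpow_le_rpow_of_nonpos hl hlM (by linarith)) (by positivity)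
    _ ≤ max C (C * δ ^ (-s) * M ^ s) * l ^ (-s) := by gcongr; exact le_max_right _ _

lemma le_mul_rpow_neg_of_rpow_mul_le {a n K s : ℝ} (ha : 0 ≤ a) (hn : 0 < n) (hs : 0 < s)
    (h : a ^ s * n ≤ K) : a ≤ K ^ (1 / s) * n ^ (-(1 / s)) := by
  have hK : 0 ≤ K := le_trans (by positivity) h
  rw [rpow_neg hn.le, le_mul_inv_iff₀ (by positivity), one_div,
    le_rpow_inv_iff_of_pos (by positivity) hK hs, mul_rpow ha (by positivity),
    rpow_inv_rpow hn.le hs.ne']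
  exact h

lemma rpow_mul_succ_le_of_effectiveDim_le {lam : ℕ → ℝ} (hpos : ∀ i, 0 < lam i)
    (hmono : Antitone lam) (hsum : Summable lam) {s C₃ : ℝ} (hs : 0 < s) (hs1 : s < 1)
    (hN : ∀ l, 0 < l → l ≤ s * lam 0 / (1 - s) → effectiveDim lam l ≤ C₃ * l ^ (-s)) (i : ℕ) :
    lam i ^ s * ((i : ℝ) + 1) ≤ C₃ * s ^ (-s) * (1 - s) ^ (s - 1) := by
  have h1s : 0 < 1 - s := by linarith
  set a := lam i
  have ha : 0 < a := hpos i
  set l := s * a / (1 - s) with hl_def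
  have hl : 0 < l := by positivity
  have hle : l ≤ s * lam 0 / (1 - s) := by
    rw [hl_def]
    gcongr
    exact hmono (Nat.zero_le i)
  have hfrac : a / (a + l) = 1 - s := by
    rw [hl_def, div_eq_iff (by positivity)]
    field_simp
    ring
  have hlow : ((i : ℝ) + 1) * (1 - s) ≤ C₃ * l ^ (-s) := by
    rw [← hfrac]
    exact (succ_mul_div_add_le_effectiveDim (fun j => (hpos j).le) hmono hsum hl i).trans
      (hN l hl hle)
  have hl_rpow : a ^ s * l ^ (-s) = s ^ (-s) * (1 - s) ^ s := by
    rw [hl_def, rpow_neg (by positivity), div_rpow (by positivity) h1s.le,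
      mul_rpow hs.le ha.le, rpow_neg hs.le]
    field_simp
  calc a ^ s * ((i : ℝ) + 1) = a ^ s * (((i : ℝ) + 1) * (1 - s)) / (1 - s) := by
        field_simp
    _ ≤ a ^ s * (C₃ * l ^ (-s)) / (1 - s) := by gcongr
    _ = C₃ * s ^ (-s) * (1 - s) ^ (s - 1) := by
      rw [rpow_sub_one h1s.ne', mul_left_comm, hl_rpow]
      ring

/-- For a non-increasing summable sequence of positive reals (`lam i` denotes
`λ_{i+1}`, so `lam 0 = λ₁`): if `N(λ) ≤ C·λ^{-s}` on `(0,δ]` then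
`λ_i ≤ C'·i^{-1/s}` for some `C' > 0`; explicitly, if `N(λ) ≤ C₃·λ^{-s}` for
all `λ ∈ (0, s·λ₁/(1-s)]` then `λ_i ≤ (C₃·s^{-s}·(1-s)^{s-1})^{1/s}·i^{-1/s}`. -/
theorem stmt5 (lam : ℕ → ℝ) (hpos : ∀ i, 0 < lam i) (hmono : Antitone lam)
    (hsum : Summable lam) (s : ℝ) (hs : 0 < s) (hs1 : s < 1)
    (C δ : ℝ) (hC : 0 < C) (hδ : 0 < δ)
    (hN : ∀ l : ℝ, 0 < l → l ≤ δ →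
      (∑' i, lam i / (lam i + l)) ≤ C * l ^ (-s)) :
    (∃ C' : ℝ, 0 < C' ∧ ∀ i : ℕ, lam i ≤ C' * ((i : ℝ) + 1) ^ (-(1 / s))) ∧
      ∀ C₃ : ℝ, 0 < C₃ →
        (∀ l : ℝ, 0 < l → l ≤ s * lam 0 / (1 - s) →
            (∑' i, lam i / (lam i + l)) ≤ C₃ * l ^ (-s)) →
        ∀ i : ℕ, lam i ≤ (C₃ * s ^ (-s) * (1 - s) ^ (s - 1)) ^ (1 / s) *
            ((i : ℝ) + 1) ^ (-(1 / s)) := by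
  have hexplicit : ∀ C₃ : ℝ,
      (∀ l : ℝ, 0 < l → l ≤ s * lam 0 / (1 - s) → effectiveDim lam l ≤ C₃ * l ^ (-s)) →
      ∀ i : ℕ, lam i ≤ (C₃ * s ^ (-s) * (1 - s) ^ (s - 1)) ^ (1 / s) *
        ((i : ℝ) + 1) ^ (-(1 / s)) := fun C₃ hN₃ i =>
    le_mul_rpow_neg_of_rpow_mul_le (hpos i).le (by positivity) hs
      (rpow_mul_succ_le_of_effectiveDim_le hpos hmono hsum hs hs1 hN₃ i)
  refine ⟨?_, fun C₃ _ => hexplicit C₃⟩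
  obtain ⟨C₃, hC₃, hN₃⟩ := exists_le_mul_rpow_neg_of_antitoneOn
    (effectiveDim_antitoneOn (fun i => (hpos i).le) hsum) hs.le hC hδ hN (s * lam 0 / (1 - s))
  exact ⟨_, by positivity, hexplicit C₃ hN₃⟩
end

section
/- Let M > 0, α > 0, let a ≤ b be integers, let η_a, …, η_b be real numbers in (0, 1/M], and let u ∈ [0, M]. Then u^{2α} · ∏_{j=a}^{b} (1 − η_j u)² ≤ ((α/e)^{2α} + M^{2α}) / (1 + (Σ_{j=a}^{b} η_j)^{2α}). -/
/-!
Since `1 - x ≤ exp (-x)`, the product is at most `exp (-S u)` with `S = ∑ η_j`, and every factor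
lies in `[0, 1]` because `η_j u ≤ 1`. So `X := u^{2α} exp (-S u)²` dominates the left-hand side,
`X ≤ M^{2α}` trivially, and `S^{2α} X = (S u)^{2α} exp (-S u)² ≤ (α/e)^{2α}` because
`t ↦ t exp (-t/α)` is maximised at `t = α`. Adding the two bounds gives `(1 + S^{2α}) X ≤ …`.
-/

open Real Finset

lemma Real.mul_exp_neg_div_le {α : ℝ} (hα : 0 < α) (t : ℝ) : t * exp (-(t / α)) ≤ α / exp 1 := by
  have h : t / α ≤ exp (t / α - 1) := by linarith [add_one_le_exp (t / α - 1)]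
  calc t * exp (-(t / α)) = α * (t / α) * exp (-(t / α)) := by field_simp
    _ ≤ α * exp (t / α - 1) * exp (-(t / α)) := by gcongr
    _ = α / exp 1 := by rw [mul_assoc, ← exp_add, show t / α - 1 + -(t / α) = -1 by ring, exp_neg, div_eq_mul_inv]

lemma Real.rpow_two_mul_mul_exp_neg_sq_le {α t : ℝ} (hα : 0 < α) (ht : 0 ≤ t) :
    t ^ (2 * α) * exp (-t) ^ 2 ≤ (α / exp 1) ^ (2 * α) := by
  have h : t ^ (2 * α) * exp (-t) ^ 2 = (t * exp (-(t / α))) ^ (2 * α) := by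
    rw [mul_rpow ht (exp_pos _).le, ← exp_mul, ← exp_nat_mul]
    congr 2
    field_simp
    ring
  rw [h]
  exact rpow_le_rpow (by positivity) (mul_exp_neg_div_le hα t) (by positivity)

lemma Finset.prod_one_sub_le_exp_neg_sum {ι : Type*} (s : Finset ι) (x : ι → ℝ)
    (hx : ∀ i ∈ s, x i ≤ 1) : ∏ i ∈ s, (1 - x i) ≤ exp (-∑ i ∈ s, x i) := by
  rw [← sum_neg_distrib, exp_sum]
  exact prod_le_prod (fun i hi ↦ sub_nonneg.2 (hx i hi)) fun i _ ↦ one_sub_le_exp_neg (x i)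

lemma le_div_one_add_of_le_of_mul_le {x s A B : ℝ} (hs : 0 ≤ s) (hB : x ≤ B) (hA : s * x ≤ A) :
    x ≤ (A + B) / (1 + s) := by
  rw [le_div_iff₀ (by positivity)]
  linarith

theorem stmt9_general (M α : ℝ) (hM : 0 < M) (hα : 0 < α) (a b : ℤ)
    (η : ℤ → ℝ) (hη : ∀ j ∈ Finset.Icc a b, η j ∈ Set.Ioc (0 : ℝ) (1 / M))
    (u : ℝ) (hu : u ∈ Set.Icc (0 : ℝ) M) :
    u ^ (2 * α) * (∏ j ∈ Finset.Icc a b, (1 - η j * u)) ^ 2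
      ≤ ((α / Real.exp 1) ^ (2 * α) + M ^ (2 * α)) /
          (1 + (∑ j ∈ Finset.Icc a b, η j) ^ (2 * α)) := by
  obtain ⟨hu0, huM⟩ := hu
  set S := ∑ j ∈ Icc a b, η j
  have hS : 0 ≤ S := sum_nonneg fun j hj ↦ (hη j hj).1.le
  have hstep : ∀ j ∈ Icc a b, η j * u ≤ 1 := fun j hj ↦ by
    calc η j * u ≤ 1 / M * M := mul_le_mul (hη j hj).2 huM hu0 (by positivity)
      _ = 1 := one_div_mul_cancel hM.ne'
  have hprod : 0 ≤ ∏ j ∈ Icc a b, (1 - η j * u) :=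
    prod_nonneg fun j hj ↦ sub_nonneg.2 (hstep j hj)
  have hprod_le : ∏ j ∈ Icc a b, (1 - η j * u) ≤ exp (-(S * u)) := by
    have h := prod_one_sub_le_exp_neg_sum (Icc a b) (fun j ↦ η j * u) hstep
    rwa [← sum_mul] at h
  have hexp_le_one : exp (-(S * u)) ≤ 1 := exp_le_one_iff.2 (by nlinarith)
  calc u ^ (2 * α) * (∏ j ∈ Icc a b, (1 - η j * u)) ^ 2
      ≤ u ^ (2 * α) * exp (-(S * u)) ^ 2 := by gcongr
    _ ≤ _ := by
      refine le_div_one_add_of_le_of_mul_le (by positivity) ?_ ?_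
      · calc u ^ (2 * α) * exp (-(S * u)) ^ 2 ≤ M ^ (2 * α) * 1 ^ 2 := by gcongr
          _ = M ^ (2 * α) := by ring
      · rw [← mul_assoc, ← mul_rpow hS hu0]
        exact rpow_two_mul_mul_exp_neg_sq_le hα (by positivity)

/-- Scalar polynomial inequality: for `M > 0`, `α > 0`, integers `a ≤ b`,
`η_j ∈ (0, 1/M]` and `u ∈ [0, M]`,
`u^{2α} · ∏_{j=a}^b (1 - η_j u)² ≤ ((α/e)^{2α} + M^{2α})/(1 + (Σ η_j)^{2α})`. -/
theorem stmt9 (M α : ℝ) (hM : 0 < M) (hα : 0 < α) (a b : ℤ) (hab : a ≤ b)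
    (η : ℤ → ℝ) (hη : ∀ j ∈ Finset.Icc a b, η j ∈ Set.Ioc (0 : ℝ) (1 / M))
    (u : ℝ) (hu : u ∈ Set.Icc (0 : ℝ) M) :
    u ^ (2 * α) * (∏ j ∈ Finset.Icc a b, (1 - η j * u)) ^ 2
      ≤ ((α / Real.exp 1) ^ (2 * α) + M ^ (2 * α)) /
          (1 + (∑ j ∈ Finset.Icc a b, η j) ^ (2 * α)) :=
  stmt9_general M α hM hα a b η hη u hu
end

section
/- Let 0 < θ < 1 and ν > 0. There exists a constant C₀ > 0, independent of b, such that for every real b ≥ 2: ∫₁^{b} u^{-2θ} / (1 + (b^{1−θ} − u^{1−θ})^{ν}) du ≤ C₀·b^{ω}·log(b) if (ν,θ) ∈ Ω, and ∫₁^{b} u^{-2θ} / (1 + (b^{1−θ} − u^{1−θ})^{ν}) du ≤ C₀·b^{ω} if (ν,θ) ∉ Ω. -/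
/-!
Split `[1, b]` at `b / 2`. On `[1, b / 2]` the denominator is at least a constant times
`b ^ (ν (1 - θ))`, which leaves `b ^ (-ν (1 - θ)) ∫₁^{b/2} u ^ (-2θ) du`. On `[b / 2, b]` the
numerator is at most `2 ^ (2θ) b ^ (-2θ)`, and concavity of `x ↦ x ^ (1 - θ)` gives
`b ^ (1 - θ) - u ^ (1 - θ) ≥ (1 - θ) b ^ (-θ) (b - u)`; since `(1 + x) ^ ν ≤ 2 ^ ν (1 + x ^ ν)`,
the substitution `t = 1 + (1 - θ) b ^ (-θ) (b - u)` bounds this piece by a multiple of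
`b ^ (-θ) ∫₁^T t ^ (-ν) dt` with `T ≍ b ^ (1 - θ)`.

Both pieces are governed by `∫₁^x t ^ (-α) dt`, which is `O(x ^ (1 - α))`, `log x` or `O(1)` as
`α < 1`, `α = 1` or `α > 1`. The powers of `b` that arise are `b ^ (1 - 2θ - ν (1 - θ))`,
`b ^ (-θ)` and `b ^ (-ν (1 - θ))`, and `ω` is the largest of the three exponents. A logarithm
appears only for `α = 1` (`θ = 1/2` in the first piece, `ν = 1` in the second), and it is
absorbed by a strictly larger power of `b` unless `(ν, θ) ∈ Ω`.
-/

open Real MeasureTheory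

/-- The exponent `ω(ν, θ)`. -/
noncomputable def rateExp (ν θ : ℝ) : ℝ :=
  if ν ≤ 1 ∧ θ ≤ 1 / 2 then 1 - 2 * θ - ν + ν * θ
  else if 1 ≤ ν ∧ θ ≤ ν / (ν + 1) then -θ
  else -ν * (1 - θ)

/-- The exceptional set `Ω`. -/
def logSet : Set (ℝ × ℝ) :=
  {p | (0 < p.1 ∧ p.1 ≤ 1 ∧ p.2 = 1 / 2) ∨ (p.1 = 1 ∧ 0 < p.2 ∧ p.2 ≤ 1 / 2)}

open Asymptotics Filter Set intervalIntegral

lemma isBigO_principal_of_le {s : Set ℝ} {f g : ℝ → ℝ} (hf : ∀ x ∈ s, 0 ≤ f x)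
    (h : ∀ x ∈ s, f x ≤ g x) : f =O[𝓟 s] g :=
  isBigO_principal.2 ⟨1, fun x hx => by
    rw [one_mul, Real.norm_of_nonneg (hf x hx)]
    exact (h x hx).trans (Real.le_norm_self _)⟩

lemma Asymptotics.IsBigOWith.le_mul_of_principal {s : Set ℝ} {f g : ℝ → ℝ} {C : ℝ}
    (h : IsBigOWith C (𝓟 s) f g) (hg : ∀ x ∈ s, 0 ≤ g x) {x : ℝ} (hx : x ∈ s) :
    f x ≤ C * g x := by
  have := h.bound
  rw [eventually_principal] at this
  simpa [Real.norm_of_nonneg (hg x hx)] using (Real.le_norm_self _).trans (this x hx)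

lemma rpow_isBigO_rpow {e w : ℝ} (h : e ≤ w) :
    (fun b : ℝ => b ^ e) =O[𝓟 (Ici 2)] fun b => b ^ w :=
  isBigO_principal_of_le (fun b (hb : 2 ≤ b) => Real.rpow_nonneg (by linarith) e)
    fun b (hb : 2 ≤ b) => Real.rpow_le_rpow_of_exponent_le (by linarith) h

lemma one_isBigO_log : (fun _ : ℝ => (1 : ℝ)) =O[𝓟 (Ici 2)] Real.log :=
  isBigO_principal.2 ⟨(Real.log 2)⁻¹, fun b (hb : 2 ≤ b) => by
    have h2 : 0 < Real.log 2 := Real.log_pos one_lt_two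
    rw [norm_one, Real.norm_of_nonneg (Real.log_nonneg (by linarith)), inv_mul_eq_div,
      one_le_div h2]
    exact Real.log_le_log two_pos hb⟩

lemma rpow_isBigO_rpow_mul_log {e w : ℝ} (h : e ≤ w) :
    (fun b : ℝ => b ^ e) =O[𝓟 (Ici 2)] fun b => b ^ w * Real.log b := by
  simpa using (rpow_isBigO_rpow h).mul one_isBigO_log

lemma rpow_mul_log_isBigO_rpow {e w : ℝ} (h : e < w) :
    (fun b : ℝ => b ^ e * Real.log b) =O[𝓟 (Ici 2)] fun b => b ^ w := by
  refine isBigO_principal.2 ⟨(w - e)⁻¹, fun b (hb : 2 ≤ b) => ?_⟩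
  have hb0 : 0 < b := by linarith
  rw [Real.norm_of_nonneg (by have := Real.log_nonneg (by linarith : (1:ℝ) ≤ b); positivity),
    Real.norm_of_nonneg (by positivity)]
  calc b ^ e * Real.log b ≤ b ^ e * (b ^ (w - e) / (w - e)) :=
        mul_le_mul_of_nonneg_left (Real.log_le_rpow_div hb0.le (by linarith)) (by positivity)
    _ = (w - e)⁻¹ * b ^ w := by
        rw [mul_div_assoc', ← Real.rpow_add hb0, add_sub_cancel, div_eq_inv_mul]

noncomputable def powIntegral (α x : ℝ) : ℝ := ∫ u in (1:ℝ)..x, u ^ (-α)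

lemma powIntegral_nonneg {α x : ℝ} (hx : 1 ≤ x) : 0 ≤ powIntegral α x :=
  integral_nonneg hx fun u hu => Real.rpow_nonneg (by linarith [hu.1]) _

lemma powIntegral_le_of_lt_one {α x : ℝ} (hα : α < 1) :
    powIntegral α x ≤ x ^ (1 - α) / (1 - α) := by
  rw [powIntegral, integral_rpow (Or.inl (by linarith)), Real.one_rpow, neg_add_eq_sub]
  gcongr; linarith

lemma powIntegral_le_of_one_lt {α x : ℝ} (hα : 1 < α) (hx : 1 ≤ x) :
    powIntegral α x ≤ (α - 1)⁻¹ := by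
  have h0 : (0:ℝ) ∉ uIcc 1 x := by rw [uIcc_of_le hx]; exact fun h => by linarith [h.1]
  rw [powIntegral, integral_rpow (Or.inr ⟨by linarith, h0⟩), Real.one_rpow,
    show -α + 1 = -(α - 1) by ring, div_neg, ← neg_div, neg_sub, div_eq_inv_mul]
  have : 0 ≤ x ^ (-(α - 1)) := Real.rpow_nonneg (by linarith) _
  have : 0 < (α - 1)⁻¹ := inv_pos.2 (by linarith)
  nlinarith

lemma powIntegral_one {x : ℝ} (hx : 0 < x) : powIntegral 1 x = Real.log x := by
  have h0 : (0:ℝ) ∉ uIcc 1 x := by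
    rw [uIcc_eq_union]; rintro (h | h) <;> linarith [h.1]
  simp only [powIntegral, Real.rpow_neg_one]
  rw [integral_inv h0, div_one]

section Growth

variable {T : ℝ → ℝ} {K p : ℝ}

lemma log_comp_isBigO_log (hT : ∀ b ∈ Ici (2:ℝ), 1 ≤ T b ∧ T b ≤ K * b ^ p) :
    (fun b => Real.log (T b)) =O[𝓟 (Ici 2)] Real.log := by
  have hbound : (fun b => Real.log (T b)) =O[𝓟 (Ici 2)] fun b => Real.log K + p * Real.log b := by
    refine isBigO_principal_of_le (fun b hb => Real.log_nonneg (hT b hb).1) fun b hb => ?_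
    have hb0 : 0 < b := by linarith [mem_Ici.1 hb]
    have hK : 0 < K * b ^ p := by linarith [hT b hb]
    have hK0 : 0 < K := pos_of_mul_pos_left hK (Real.rpow_nonneg hb0.le p)
    calc Real.log (T b) ≤ Real.log (K * b ^ p) :=
          Real.log_le_log (by linarith [hT b hb]) (hT b hb).2
      _ = Real.log K + p * Real.log b := by
          rw [Real.log_mul hK0.ne' (Real.rpow_pos_of_pos hb0 p).ne', Real.log_rpow hb0]
  exact hbound.trans (((isBigO_const_one ℝ _ _).trans one_isBigO_log).add
    ((isBigO_refl _ _).const_mul_left p))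

lemma rpow_mul_powIntegral_one_comp_isBigO (hT : ∀ b ∈ Ici (2:ℝ), 1 ≤ T b ∧ T b ≤ K * b ^ p)
    (κ : ℝ) : (fun b => b ^ (-κ) * powIntegral 1 (T b)) =O[𝓟 (Ici 2)]
      fun b => b ^ (-κ) * Real.log b := by
  have hlog : (fun b => b ^ (-κ) * powIntegral 1 (T b)) =O[𝓟 (Ici 2)]
      fun b => b ^ (-κ) * Real.log (T b) :=
    isBigO_principal_of_le (fun b hb => mul_nonneg (Real.rpow_nonneg (by linarith [mem_Ici.1 hb]) _)
        (powIntegral_nonneg (hT b hb).1))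
      fun b hb => by rw [powIntegral_one (by linarith [hT b hb])]
  exact hlog.trans ((isBigO_refl _ _).mul (log_comp_isBigO_log hT))

lemma rpow_mul_powIntegral_comp_isBigO (hT : ∀ b ∈ Ici (2:ℝ), 1 ≤ T b ∧ T b ≤ K * b ^ p)
    {α κ w : ℝ} (h₁ : p * (1 - α) - κ ≤ w) (h₂ : -κ ≤ w) (h₃ : α = 1 → -κ < w) :
    (fun b => b ^ (-κ) * powIntegral α (T b)) =O[𝓟 (Ici 2)] fun b => b ^ w := by
  have hnonneg : ∀ b ∈ Ici (2:ℝ), 0 ≤ b ^ (-κ) * powIntegral α (T b) := fun b hb =>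
    mul_nonneg (Real.rpow_nonneg (by linarith [mem_Ici.1 hb]) _) (powIntegral_nonneg (hT b hb).1)
  rcases lt_trichotomy α 1 with hα | rfl | hα
  · refine (isBigO_principal_of_le hnonneg (g := fun b => K ^ (1 - α) / (1 - α) *
      b ^ (p * (1 - α) - κ)) fun b hb => ?_).trans ((rpow_isBigO_rpow h₁).const_mul_left _)
    have hb0 : 0 < b := by linarith [mem_Ici.1 hb]
    have hK : 0 ≤ K := nonneg_of_mul_nonneg_left (by linarith [hT b hb])
      (Real.rpow_pos_of_pos hb0 p)
    have hP : powIntegral α (T b) ≤ (K * b ^ p) ^ (1 - α) / (1 - α) :=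
      (powIntegral_le_of_lt_one hα).trans <| div_le_div_of_nonneg_right
        (Real.rpow_le_rpow (by linarith [hT b hb]) (hT b hb).2 (by linarith)) (by linarith)
    calc b ^ (-κ) * powIntegral α (T b) ≤ b ^ (-κ) * ((K * b ^ p) ^ (1 - α) / (1 - α)) :=
          mul_le_mul_of_nonneg_left hP (Real.rpow_nonneg hb0.le _)
      _ = K ^ (1 - α) / (1 - α) * b ^ (p * (1 - α) - κ) := by
          rw [Real.mul_rpow hK (Real.rpow_nonneg hb0.le p), ← Real.rpow_mul hb0.le,
            sub_eq_neg_add (p * (1 - α)), Real.rpow_add hb0]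
          ring
  · exact (rpow_mul_powIntegral_one_comp_isBigO hT κ).trans (rpow_mul_log_isBigO_rpow (h₃ rfl))
  · refine (isBigO_principal_of_le hnonneg (g := fun b => (α - 1)⁻¹ * b ^ (-κ))
      fun b hb => ?_).trans ((rpow_isBigO_rpow h₂).const_mul_left _)
    rw [mul_comm]
    exact mul_le_mul_of_nonneg_right (powIntegral_le_of_one_lt hα (hT b hb).1)
      (Real.rpow_nonneg (by linarith [mem_Ici.1 hb]) _)

lemma rpow_mul_powIntegral_comp_isBigO_mul_log
    (hT : ∀ b ∈ Ici (2:ℝ), 1 ≤ T b ∧ T b ≤ K * b ^ p)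
    {α κ w : ℝ} (h₁ : p * (1 - α) - κ ≤ w) (h₂ : -κ ≤ w) :
    (fun b => b ^ (-κ) * powIntegral α (T b)) =O[𝓟 (Ici 2)]
      fun b => b ^ w * Real.log b := by
  by_cases hα : α = 1
  · subst hα
    exact (rpow_mul_powIntegral_one_comp_isBigO hT κ).trans
      ((rpow_isBigO_rpow h₂).mul (isBigO_refl _ _))
  · exact (rpow_mul_powIntegral_comp_isBigO hT h₁ h₂ (absurd · hα)).trans
      (rpow_isBigO_rpow_mul_log le_rfl)

end Growth

lemma rpow_le_rpow_add_mul_sub {p b u : ℝ} (hp₀ : 0 ≤ p) (hp₁ : p ≤ 1) (hb : 0 < b) (hu : 0 ≤ u) :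
    u ^ p ≤ b ^ p + p * b ^ (p - 1) * (u - b) := by
  have hbern := rpow_one_add_le_one_add_mul_self
    (by have := div_nonneg hu hb.le; linarith : -1 ≤ u / b - 1) hp₀ hp₁
  rw [add_sub_cancel, Real.div_rpow hu hb.le, div_le_iff₀ (Real.rpow_pos_of_pos hb p)] at hbern
  calc u ^ p ≤ (1 + p * (u / b - 1)) * b ^ p := hbern
    _ = b ^ p + p * (b ^ (p - 1) * b) * (u / b - 1) := by
        rw [← Real.rpow_add_one hb.ne', sub_add_cancel]; ring
    _ = b ^ p + p * b ^ (p - 1) * (u - b) := by field_simp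

lemma one_sub_inv_two_rpow_mul_le_rpow_sub_rpow {p b u : ℝ} (hp : 0 ≤ p) (hu : 0 ≤ u)
    (hub : u ≤ b / 2) : (1 - (2 ^ p)⁻¹) * b ^ p ≤ b ^ p - u ^ p := by
  have h : u ^ p ≤ b ^ p / 2 ^ p := by
    rw [← Real.div_rpow (by linarith) zero_le_two]; exact Real.rpow_le_rpow hu hub hp
  rw [div_eq_mul_inv] at h
  linarith

lemma one_add_rpow_le_two_rpow_mul {x ν : ℝ} (hx : 0 ≤ x) (hν : 0 ≤ ν) :
    (1 + x) ^ ν ≤ 2 ^ ν * (1 + x ^ ν) := by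
  calc (1 + x) ^ ν ≤ (2 * max 1 x) ^ ν :=
        Real.rpow_le_rpow (by linarith) (by linarith [le_max_left 1 x, le_max_right 1 x]) hν
    _ = 2 ^ ν * max 1 (x ^ ν) := by
        rw [Real.mul_rpow zero_le_two (by positivity), Real.rpow_max zero_le_one hx hν,
          Real.one_rpow]
    _ ≤ 2 ^ ν * (1 + x ^ ν) := by
        gcongr; exact max_le (by linarith [Real.rpow_nonneg hx ν]) (by linarith)

noncomputable def kernel (θ ν b u : ℝ) : ℝ :=
  u ^ (-(2 * θ)) / (1 + (b ^ (1 - θ) - u ^ (1 - θ)) ^ ν)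

noncomputable def kernelIntegral (θ ν b : ℝ) : ℝ := ∫ u in Icc 1 b, kernel θ ν b u

section Kernel

variable {θ ν b u : ℝ}

lemma kernel_denom_pos (hθ : θ ≤ 1) (hu : 0 ≤ u) (hub : u ≤ b) :
    0 < 1 + (b ^ (1 - θ) - u ^ (1 - θ)) ^ ν := by
  have := Real.rpow_le_rpow hu hub (by linarith : 0 ≤ 1 - θ)
  have := Real.rpow_nonneg (by linarith : 0 ≤ b ^ (1 - θ) - u ^ (1 - θ)) ν
  linarith

lemma continuousOn_kernel (hθ : θ ≤ 1) (hν : 0 ≤ ν) : ContinuousOn (kernel θ ν b) (Icc 1 b) := by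
  refine ContinuousOn.div ?_ ?_ fun u hu => (kernel_denom_pos hθ (by linarith [hu.1]) hu.2).ne'
  · exact continuousOn_id.rpow_const fun u hu => Or.inl (by simp only [id]; linarith [hu.1])
  · exact continuousOn_const.add ((continuousOn_const.sub
      (continuousOn_id.rpow_const fun _ _ => Or.inr (by linarith))).rpow_const
        fun _ _ => Or.inr hν)

lemma kernel_le_of_le_half (hθ : θ < 1) (hν : 0 ≤ ν) (hu : 0 < u) (hub : u ≤ b / 2) :
    kernel θ ν b u ≤ (1 - (2 ^ (1 - θ))⁻¹) ^ (-ν) * b ^ (-(ν * (1 - θ))) * u ^ (-(2 * θ)) := by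
  have hb : 0 < b := by linarith
  have hc : 0 < 1 - ((2:ℝ) ^ (1 - θ))⁻¹ :=
    sub_pos.2 (inv_lt_one_of_one_lt₀ (Real.one_lt_rpow one_lt_two (by linarith)))
  have hcb : 0 < (1 - (2 ^ (1 - θ))⁻¹) * b ^ (1 - θ) := mul_pos hc (Real.rpow_pos_of_pos hb _)
  have hD : ((1 - (2 ^ (1 - θ))⁻¹) * b ^ (1 - θ)) ^ ν ≤ 1 + (b ^ (1 - θ) - u ^ (1 - θ)) ^ ν := by
    have := Real.rpow_le_rpow hcb.le
      (one_sub_inv_two_rpow_mul_le_rpow_sub_rpow (by linarith) hu.le hub) hν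
    linarith
  calc kernel θ ν b u
      ≤ u ^ (-(2 * θ)) / ((1 - (2 ^ (1 - θ))⁻¹) * b ^ (1 - θ)) ^ ν :=
        div_le_div_of_nonneg_left (Real.rpow_nonneg hu.le _) (Real.rpow_pos_of_pos hcb ν) hD
    _ = (1 - (2 ^ (1 - θ))⁻¹) ^ (-ν) * b ^ (-(ν * (1 - θ))) * u ^ (-(2 * θ)) := by
        rw [Real.mul_rpow hc.le (Real.rpow_nonneg hb.le _), ← Real.rpow_mul hb.le,
          Real.rpow_neg hc.le, Real.rpow_neg hb.le, mul_comm (1 - θ) ν]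
        field_simp

lemma kernel_le_of_half_le (hθ₀ : 0 ≤ θ) (hθ : θ ≤ 1) (hν : 0 ≤ ν) (hu : b / 2 ≤ u)
    (hub : u ≤ b) (hb : 0 < b) :
    kernel θ ν b u ≤
      2 ^ (2 * θ + ν) * b ^ (-(2 * θ)) * (1 + (1 - θ) * b ^ (-θ) * (b - u)) ^ (-ν) := by
  set x := (1 - θ) * b ^ (-θ) * (b - u)
  have hx : 0 ≤ x :=
    mul_nonneg (mul_nonneg (by linarith) (Real.rpow_nonneg hb.le _)) (by linarith)
  have hxD : x ≤ b ^ (1 - θ) - u ^ (1 - θ) := by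
    have := rpow_le_rpow_add_mul_sub (by linarith : 0 ≤ 1 - θ) (by linarith) hb
      (by linarith : 0 ≤ u)
    rw [show 1 - θ - 1 = -θ by ring] at this
    linarith
  have h1x : 0 < (1 + x) ^ ν := Real.rpow_pos_of_pos (by linarith) ν
  have hD : (1 + x) ^ ν / 2 ^ ν ≤ 1 + (b ^ (1 - θ) - u ^ (1 - θ)) ^ ν := by
    rw [div_le_iff₀' (by positivity)]
    exact (one_add_rpow_le_two_rpow_mul hx hν).trans (by gcongr)
  have hN : u ^ (-(2 * θ)) ≤ 2 ^ (2 * θ) * b ^ (-(2 * θ)) := by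
    calc u ^ (-(2 * θ)) ≤ (b / 2) ^ (-(2 * θ)) :=
          Real.rpow_le_rpow_of_nonpos (by linarith) hu (by linarith)
      _ = 2 ^ (2 * θ) * b ^ (-(2 * θ)) := by
          rw [Real.div_rpow hb.le zero_le_two, Real.rpow_neg zero_le_two]; field_simp
  calc kernel θ ν b u ≤ 2 ^ (2 * θ) * b ^ (-(2 * θ)) / ((1 + x) ^ ν / 2 ^ ν) :=
        div_le_div₀ (by positivity) hN (by positivity) hD
    _ = 2 ^ (2 * θ + ν) * b ^ (-(2 * θ)) * (1 + x) ^ (-ν) := by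
        rw [Real.rpow_add two_pos, Real.rpow_neg (by linarith : 0 ≤ 1 + x)]; field_simp

lemma integral_kernel_head_le (hθ : θ < 1) (hν : 0 ≤ ν) (hb : 2 ≤ b) :
    ∫ u in (1:ℝ)..b / 2, kernel θ ν b u ≤
      (1 - (2 ^ (1 - θ))⁻¹) ^ (-ν) * (b ^ (-(ν * (1 - θ))) * powIntegral (2 * θ) (b / 2)) := by
  have hb2 : (1:ℝ) ≤ b / 2 := by linarith
  have hkernel : IntervalIntegrable (kernel θ ν b) volume 1 (b / 2) := by
    refine ((continuousOn_kernel hθ.le hν).mono ?_).intervalIntegrable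
    rw [uIcc_of_le hb2]; exact Icc_subset_Icc le_rfl (by linarith)
  have hpow : IntervalIntegrable (fun u : ℝ => u ^ (-(2 * θ))) volume 1 (b / 2) :=
    intervalIntegral.intervalIntegrable_rpow
      (Or.inr fun h => by rw [uIcc_of_le hb2] at h; linarith [h.1])
  rw [powIntegral, ← intervalIntegral.integral_const_mul, ← intervalIntegral.integral_const_mul]
  refine integral_mono_on hb2 hkernel ((hpow.const_mul _).const_mul _) fun u hu => ?_
  rw [← mul_assoc]
  exact kernel_le_of_le_half hθ hν (by linarith [hu.1]) hu.2

lemma integral_one_add_mul_sub_rpow_neg {a b c : ℝ} (ν : ℝ) (hc : c ≠ 0) :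
    ∫ u in a..b, (1 + c * (b - u)) ^ (-ν) = c⁻¹ * powIntegral ν (1 + c * (b - a)) := by
  have := integral_comp_sub_mul (fun t : ℝ => t ^ (-ν)) (a := a) (b := b) hc (1 + c * b)
  rw [show 1 + c * b - c * b = 1 by ring, show 1 + c * b - c * a = 1 + c * (b - a) by ring,
    smul_eq_mul] at this
  rw [powIntegral, ← this]
  congr 1 with u
  ring_nf

lemma integral_kernel_tail_le (hθ₀ : 0 ≤ θ) (hθ : θ < 1) (hν : 0 ≤ ν) (hb2 : 2 ≤ b) :
    ∫ u in b / 2..b, kernel θ ν b u ≤ 2 ^ (2 * θ + ν) * (1 - θ)⁻¹ *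
      (b ^ (-θ) * powIntegral ν (1 + (1 - θ) / 2 * b ^ (1 - θ))) := by
  have hb : 0 < b := by linarith
  set c := (1 - θ) * b ^ (-θ)
  have hc : 0 < c := mul_pos (by linarith) (Real.rpow_pos_of_pos hb _)
  have hkernel : IntervalIntegrable (kernel θ ν b) volume (b / 2) b := by
    refine ((continuousOn_kernel hθ.le hν).mono ?_).intervalIntegrable
    rw [uIcc_of_le (by linarith)]; exact Icc_subset_Icc (by linarith) le_rfl
  have hcont : ContinuousOn (fun u => (1 + c * (b - u)) ^ (-ν)) (uIcc (b / 2) b) := by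
    refine (continuousOn_const.add (continuousOn_const.mul
      (continuousOn_const.sub continuousOn_id))).rpow_const fun u hu => Or.inl ?_
    rw [uIcc_of_le (by linarith)] at hu
    have : 0 ≤ c * (b - u) := mul_nonneg hc.le (by linarith [hu.2])
    simp only [Pi.add_apply, Pi.mul_apply, Pi.sub_apply, id]
    linarith
  have hend : 1 + c * (b - b / 2) = 1 + (1 - θ) / 2 * b ^ (1 - θ) := by
    rw [show 1 - θ = -θ + 1 by ring, Real.rpow_add_one hb.ne']; ring
  calc ∫ u in b / 2..b, kernel θ ν b u
      ≤ ∫ u in b / 2..b, 2 ^ (2 * θ + ν) * b ^ (-(2 * θ)) * (1 + c * (b - u)) ^ (-ν) :=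
        integral_mono_on (by linarith) hkernel (hcont.intervalIntegrable.const_mul _)
          fun u hu => kernel_le_of_half_le hθ₀ hθ.le hν hu.1 hu.2 hb
    _ = 2 ^ (2 * θ + ν) * (1 - θ)⁻¹ *
          (b ^ (-θ) * powIntegral ν (1 + (1 - θ) / 2 * b ^ (1 - θ))) := by
        rw [intervalIntegral.integral_const_mul, integral_one_add_mul_sub_rpow_neg ν hc.ne', hend,
          mul_inv, Real.rpow_neg hb.le θ, inv_inv, show -(2 * θ) = -θ + -θ by ring,
          Real.rpow_add hb, Real.rpow_neg hb.le θ]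
        field_simp

lemma kernelIntegral_eq_add (hθ : θ ≤ 1) (hν : 0 ≤ ν) (hb : 2 ≤ b) :
    kernelIntegral θ ν b =
      (∫ u in (1:ℝ)..b / 2, kernel θ ν b u) + ∫ u in b / 2..b, kernel θ ν b u := by
  have hint : ∀ {x y : ℝ}, 1 ≤ x → x ≤ y → y ≤ b → IntervalIntegrable (kernel θ ν b) volume x y :=
    fun hx hxy hy => ((continuousOn_kernel hθ hν).mono
      (uIcc_of_le hxy ▸ Icc_subset_Icc hx hy)).intervalIntegrable
  rw [integral_add_adjacent_intervals (hint le_rfl (by linarith) (by linarith))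
    (hint (by linarith) (by linarith) le_rfl), integral_of_le (by linarith), kernelIntegral,
    integral_Icc_eq_integral_Ioc]

end Kernel

lemma rateExp_eq_max {ν θ : ℝ} (hν : 0 ≤ ν) :
    rateExp ν θ = max (max (1 - 2 * θ - ν * (1 - θ)) (-θ)) (-(ν * (1 - θ))) := by
  unfold rateExp
  split_ifs with h₁ h₂
  · rw [max_eq_left (le_max_of_le_left (by nlinarith)), max_eq_left (by nlinarith)]
    ring
  · have h : θ * (ν + 1) ≤ ν := (le_div_iff₀ (by linarith)).1 h₂.2
    rw [max_eq_left (le_max_of_le_right (by nlinarith)), max_eq_right (by nlinarith)]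
  · have hθ : 1 / 2 < θ ∧ ν * (1 - θ) < θ := by
      rcases le_or_gt ν 1 with hν₁ | hν₁
      · have hθ : 1 / 2 < θ := by by_contra! h; exact h₁ ⟨hν₁, h⟩
        refine ⟨hθ, ?_⟩
        rcases le_or_gt θ 1 with hθ₁ | hθ₁ <;> nlinarith
      · have h : ν < θ * (ν + 1) := by
          by_contra! h; exact h₂ ⟨hν₁.le, (le_div_iff₀ (by linarith)).2 h⟩
        constructor <;> nlinarith
    rw [max_eq_right (max_le (by nlinarith) (by nlinarith))]
    ring

lemma lt_rateExp_of_not_mem_logSet {ν θ : ℝ} (hν : 0 < ν) (hθ : 0 < θ) (h : (ν, θ) ∉ logSet) :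
    (2 * θ = 1 → -(ν * (1 - θ)) < rateExp ν θ) ∧ (ν = 1 → -θ < rateExp ν θ) := by
  rw [rateExp_eq_max hν.le]
  refine ⟨fun hθ₂ => lt_max_of_lt_left (lt_max_of_lt_right ?_),
    fun hν₁ => lt_max_of_lt_right ?_⟩
  · have : 1 < ν := by
      by_contra! h'; exact h (Or.inl ⟨hν, h', by linarith⟩)
    nlinarith
  · have : 1 / 2 < θ := by
      by_contra! h'
      exact h (Or.inr ⟨hν₁, hθ, h'⟩)
    subst hν₁; linarith

section Assembly

variable {θ ν : ℝ}

lemma kernelIntegral_isBigO (hθ₀ : 0 ≤ θ) (hθ : θ < 1) (hν : 0 ≤ ν) {g : ℝ → ℝ}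
    (hhead : (fun b => b ^ (-(ν * (1 - θ))) * powIntegral (2 * θ) (b / 2)) =O[𝓟 (Ici 2)] g)
    (htail : (fun b => b ^ (-θ) * powIntegral ν (1 + (1 - θ) / 2 * b ^ (1 - θ)))
      =O[𝓟 (Ici 2)] g) :
    kernelIntegral θ ν =O[𝓟 (Ici 2)] g := by
  have hbound : ∀ b ∈ Ici (2:ℝ), kernelIntegral θ ν b ≤
      (1 - (2 ^ (1 - θ))⁻¹) ^ (-ν) * (b ^ (-(ν * (1 - θ))) * powIntegral (2 * θ) (b / 2)) +
        2 ^ (2 * θ + ν) * (1 - θ)⁻¹ *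
          (b ^ (-θ) * powIntegral ν (1 + (1 - θ) / 2 * b ^ (1 - θ))) := fun b hb => by
    rw [kernelIntegral_eq_add hθ.le hν hb]
    exact add_le_add (integral_kernel_head_le hθ hν hb) (integral_kernel_tail_le hθ₀ hθ hν hb)
  have hnonneg : ∀ b ∈ Ici (2:ℝ), 0 ≤ kernelIntegral θ ν b := fun b _ =>
    setIntegral_nonneg measurableSet_Icc fun u hu => div_nonneg
      (Real.rpow_nonneg (by linarith [hu.1]) _)
      (kernel_denom_pos hθ.le (by linarith [hu.1]) hu.2).le
  exact (isBigO_principal_of_le hnonneg hbound).trans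
    ((hhead.const_mul_left _).add (htail.const_mul_left _))

lemma one_le_div_two_and_le (b : ℝ) (hb : b ∈ Ici (2:ℝ)) : 1 ≤ b / 2 ∧ b / 2 ≤ 2⁻¹ * b ^ (1:ℝ) := by
  rw [Real.rpow_one]; constructor <;> linarith [mem_Ici.1 hb]

lemma one_le_one_add_mul_rpow_and_le (hθ₀ : 0 ≤ θ) (hθ : θ ≤ 1) (b : ℝ) (hb : b ∈ Ici (2:ℝ)) :
    1 ≤ 1 + (1 - θ) / 2 * b ^ (1 - θ) ∧ 1 + (1 - θ) / 2 * b ^ (1 - θ) ≤ 2 * b ^ (1 - θ) := by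
  have : 1 ≤ b ^ (1 - θ) := Real.one_le_rpow (by linarith [mem_Ici.1 hb]) (by linarith)
  constructor <;> nlinarith

lemma kernelIntegral_isBigO_rpow_mul_log (hθ₀ : 0 ≤ θ) (hθ : θ < 1) (hν : 0 ≤ ν) {w : ℝ}
    (h₁ : 1 - 2 * θ - ν * (1 - θ) ≤ w) (h₂ : -θ ≤ w) (h₃ : -(ν * (1 - θ)) ≤ w) :
    kernelIntegral θ ν =O[𝓟 (Ici 2)] fun b => b ^ w * Real.log b :=
  kernelIntegral_isBigO hθ₀ hθ hν
    (rpow_mul_powIntegral_comp_isBigO_mul_log one_le_div_two_and_le (by linarith) h₃)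
    (rpow_mul_powIntegral_comp_isBigO_mul_log (one_le_one_add_mul_rpow_and_le hθ₀ hθ.le)
      (by linarith) h₂)

lemma kernelIntegral_isBigO_rpow (hθ₀ : 0 ≤ θ) (hθ : θ < 1) (hν : 0 ≤ ν) {w : ℝ}
    (h₁ : 1 - 2 * θ - ν * (1 - θ) ≤ w) (h₂ : -θ ≤ w) (h₃ : -(ν * (1 - θ)) ≤ w)
    (h₄ : 2 * θ = 1 → -(ν * (1 - θ)) < w) (h₅ : ν = 1 → -θ < w) :
    kernelIntegral θ ν =O[𝓟 (Ici 2)] fun b => b ^ w :=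
  kernelIntegral_isBigO hθ₀ hθ hν
    (rpow_mul_powIntegral_comp_isBigO one_le_div_two_and_le (by linarith) h₃ h₄)
    (rpow_mul_powIntegral_comp_isBigO (one_le_one_add_mul_rpow_and_le hθ₀ hθ.le)
      (by linarith) h₂ h₅)

end Assembly

/-- For `0 < θ < 1` and `ν > 0` there is a constant `C₀ > 0` independent of `b`
such that for every real `b ≥ 2`,
`∫₁^b u^{-2θ}/(1 + (b^{1-θ} - u^{1-θ})^ν) du` is bounded by `C₀·b^ω·log b`
when `(ν,θ) ∈ Ω`, and by `C₀·b^ω` otherwise. -/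
theorem stmt14 (θ ν : ℝ) (hθ : 0 < θ) (hθ1 : θ < 1) (hν : 0 < ν) :
    ∃ C₀ : ℝ, 0 < C₀ ∧ ∀ b : ℝ, 2 ≤ b →
      (((ν, θ) ∈ logSet →
          (∫ u in Set.Icc (1 : ℝ) b,
              u ^ (-(2 * θ)) / (1 + (b ^ (1 - θ) - u ^ (1 - θ)) ^ ν))
            ≤ C₀ * b ^ rateExp ν θ * Real.log b) ∧
        ((ν, θ) ∉ logSet →
          (∫ u in Set.Icc (1 : ℝ) b,
              u ^ (-(2 * θ)) / (1 + (b ^ (1 - θ) - u ^ (1 - θ)) ^ ν))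
            ≤ C₀ * b ^ rateExp ν θ)) := by
  have hω := rateExp_eq_max (θ := θ) hν.le
  have h₁ : 1 - 2 * θ - ν * (1 - θ) ≤ rateExp ν θ := hω ▸ le_max_of_le_left (le_max_left _ _)
  have h₂ : -θ ≤ rateExp ν θ := hω ▸ le_max_of_le_left (le_max_right _ _)
  have h₃ : -(ν * (1 - θ)) ≤ rateExp ν θ := hω ▸ le_max_right _ _
  have hpow : ∀ b ∈ Ici (2:ℝ), 0 ≤ b ^ rateExp ν θ := fun b hb =>
    Real.rpow_nonneg (by linarith [mem_Ici.1 hb]) _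
  by_cases hΩ : (ν, θ) ∈ logSet
  · obtain ⟨C, hC, hI⟩ :=
      (kernelIntegral_isBigO_rpow_mul_log hθ.le hθ1 hν.le h₁ h₂ h₃).exists_pos
    refine ⟨C, hC, fun b hb => ⟨fun _ => ?_, absurd hΩ⟩⟩
    rw [mul_assoc]
    exact hI.le_mul_of_principal (fun b hb => mul_nonneg (hpow b hb)
      (Real.log_nonneg (by linarith [mem_Ici.1 hb]))) hb
  · obtain ⟨h₄, h₅⟩ := lt_rateExp_of_not_mem_logSet hν hθ hΩ
    obtain ⟨C, hC, hI⟩ := (kernelIntegral_isBigO_rpow hθ.le hθ1 hν.le h₁ h₂ h₃ h₄ h₅).exists_pos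
    exact ⟨C, hC, fun b hb => ⟨(absurd · hΩ), fun _ => hI.le_mul_of_principal hpow hb⟩⟩
end

section
/- Let 0 < s < 1 and define λ_i = i^{-1/s} for i ≥ 1, so that (λ_i) is non-increasing and Σ_{i=1}^∞ λ_i < ∞. Then Σ_{i=1}^∞ λ_i^{s} = ∞, and nevertheless for every λ > 0 one has N(λ) = Σ_{i=1}^∞ 1/(1 + λ·i^{1/s}) ≤ λ^{-s} · ∫₀^∞ (1 + u^{1/s})^{-1} du, where ∫₀^∞ (1 + u^{1/s})^{-1} du < ∞; in particular N(λ) = O(λ^{-s}) as λ ↓ 0 while Tr(L^s) = ∞. -/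
/-!
The sequence `(i+1)^(-1/s)` is a `p`-series with exponent `1/s > 1`, while its `s`-th powers form
the harmonic series. For `N(λ)`, the summand `(1 + λ x^(1/s))⁻¹` equals `g (λ^s x)` with
`g u = (1 + u^(1/s))⁻¹` antitone, so the integral test bounds the sum by
`∫₀^∞ g (λ^s x) dx = λ^(-s) ∫₀^∞ g`, and `g` is integrable since it decays like `u^(-1/s)`.
-/

open Real MeasureTheory Set

theorem summable_nat_add_one_rpow_iff {p : ℝ} :
    Summable (fun n : ℕ => ((n : ℝ) + 1) ^ p) ↔ p < -1 := by
  rw [← Real.summable_nat_rpow, ← summable_nat_add_iff 1 (f := fun n : ℕ => (n : ℝ) ^ p)]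
  push_cast
  rfl

theorem antitoneOn_inv_one_add_rpow {p : ℝ} (hp : 0 ≤ p) :
    AntitoneOn (fun u : ℝ => (1 + u ^ p)⁻¹) (Ici 0) := by
  intro a ha b _ hab
  have : a ^ p ≤ b ^ p := rpow_le_rpow ha hab hp
  have : 0 ≤ a ^ p := rpow_nonneg ha p
  dsimp only
  gcongr

theorem integrableOn_Ioi_inv_one_add_rpow {p : ℝ} (hp : 1 < p) :
    IntegrableOn (fun u : ℝ => (1 + u ^ p)⁻¹) (Ioi 0) := by
  have hcont : ContinuousOn (fun u : ℝ => (1 + u ^ p)⁻¹) (Ici 0) :=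
    ContinuousOn.inv₀ (by fun_prop (disch := positivity)) fun u (hu : 0 ≤ u) => by positivity
  have hsmall : IntegrableOn (fun u : ℝ => (1 + u ^ p)⁻¹) (Ioc 0 1) :=
    ((hcont.mono Icc_subset_Ici_self).integrableOn_Icc).mono_set Ioc_subset_Icc_self
  have hlarge : IntegrableOn (fun u : ℝ => (1 + u ^ p)⁻¹) (Ioi 1) := by
    refine (integrableOn_Ioi_rpow_of_lt (neg_lt_neg hp) one_pos).mono'
      ((hcont.mono (Ioi_subset_Ici zero_le_one)).aestronglyMeasurable
        measurableSet_Ioi) ?_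
    filter_upwards [ae_restrict_mem measurableSet_Ioi] with u (hu : 1 < u)
    have hu0 : 0 < u := one_pos.trans hu
    rw [norm_inv, Real.norm_of_nonneg (by positivity), rpow_neg hu0.le]
    gcongr
    linarith
  rw [← Ioc_union_Ioi_eq_Ioi zero_le_one]
  exact hsmall.union hlarge

theorem AntitoneOn.tsum_comp_mul_add_one_le_integral {g : ℝ → ℝ} (anti : AntitoneOn g (Ici 0))
    (integrable : IntegrableOn g (Ioi 0)) (nonneg : ∀ t ∈ Ioi 0, 0 ≤ g t) {c : ℝ}
    (hc : 0 < c) :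
    ∑' n : ℕ, g (c * ((n : ℝ) + 1)) ≤ c⁻¹ * ∫ x in Ioi 0, g x := by
  have key := AntitoneOn.tsum_add_one_le_integral (f := fun x => g (c * x))
    (fun x hx y hy hxy => anti (mul_nonneg hc.le hx) (mul_nonneg hc.le hy)
      (mul_le_mul_of_nonneg_left hxy hc.le))
    ((integrableOn_Ioi_comp_mul_left_iff g 0 hc).2 (by rwa [mul_zero]))
    (fun t ht => nonneg _ (mul_pos hc ht))
  rw [integral_comp_mul_left_Ioi g 0 hc, mul_zero, smul_eq_mul] at key
  exact_mod_cast key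

/-- For `0 < s < 1` let `λ_i = i^{-1/s}` for `i ≥ 1` (here `lam i` denotes
`λ_{i+1}`, i.e. `((i:ℝ)+1)^{-1/s}`). The sequence is non-increasing and
summable, `Σ λ_i^s = ∞`, yet the effective dimension satisfies
`N(λ) = Σ 1/(1 + λ·i^{1/s}) ≤ λ^{-s}·∫₀^∞ (1+u^{1/s})⁻¹ du` for every `λ > 0`,
the integral being finite. -/
theorem stmt17 (s : ℝ) (hs : 0 < s) (hs1 : s < 1) :
    (∀ i j : ℕ, i ≤ j →
        ((j : ℝ) + 1) ^ (-(1 / s)) ≤ ((i : ℝ) + 1) ^ (-(1 / s))) ∧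
      Summable (fun i : ℕ => ((i : ℝ) + 1) ^ (-(1 / s))) ∧
      ¬ Summable (fun i : ℕ => (((i : ℝ) + 1) ^ (-(1 / s))) ^ s) ∧
      IntegrableOn (fun u : ℝ => (1 + u ^ (1 / s))⁻¹) (Set.Ioi 0) ∧
      ∀ l : ℝ, 0 < l →
        (∑' i : ℕ, (1 + l * ((i : ℝ) + 1) ^ (1 / s))⁻¹)
          ≤ l ^ (-s) * ∫ u in Set.Ioi (0 : ℝ), (1 + u ^ (1 / s))⁻¹ := by
  have h1s : 1 < 1 / s := one_lt_one_div hs hs1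
  refine ⟨fun i j hij => ?_, summable_nat_add_one_rpow_iff.2 (by linarith), ?_,
    integrableOn_Ioi_inv_one_add_rpow h1s, fun l hl => ?_⟩
  · exact rpow_le_rpow_of_nonpos (by positivity) (by gcongr) (by linarith)
  · have hpow (i : ℕ) : (((i : ℝ) + 1) ^ (-(1 / s))) ^ s = ((i : ℝ) + 1) ^ (-1 : ℝ) := by
      rw [← rpow_mul (by positivity), neg_mul, one_div_mul_cancel hs.ne']
    simp only [hpow, summable_nat_add_one_rpow_iff, lt_irrefl, not_false_eq_true]
  · have hscale (i : ℕ) : (1 + l * ((i : ℝ) + 1) ^ (1 / s))⁻¹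
        = (1 + (l ^ s * ((i : ℝ) + 1)) ^ (1 / s))⁻¹ := by
      rw [mul_rpow (by positivity) (by positivity), ← rpow_mul hl.le, mul_one_div_cancel hs.ne',
        rpow_one]
    simp only [hscale, rpow_neg hl.le]
    exact (antitoneOn_inv_one_add_rpow (by positivity)).tsum_comp_mul_add_one_le_integral
      (integrableOn_Ioi_inv_one_add_rpow h1s) (fun t (_ : 0 < t) => by positivity) (by positivity)
end
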